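/- Let k ≥ 3, n > 3k-2, and set V_n^(k) = W_{n-2k}^(k) W_{n-2k-1}^(k) ... W_{n-3k+3}^(k). Then the word V_n^(k) occurs exactly once as a factor in W_{n-2k+1}^(k). -/

import Mathlib

def kbon (k : ℕ) (n : ℕ) : ℕ :=
  if _h1 : n < k - 1 then 0
  else if _h2 : n = k - 1 then 1
  else ∑ i ∈ Finset.range k, kbon k (n - i - 1)
termination_by n
decreasing_by omega

/-- The k-bonacci morphism on words over ℕ. -/
def phiW (k : ℕ) (w : List ℕ) : List ℕ :=
  w.flatMap (fun a => if a % k = k - 1 then [a + 1] else [k * (a / k), a + 1])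

/-- The finite k-bonacci word over the infinite alphabet ℕ. -/
def W (k n : ℕ) : List ℕ := (phiW k)^[n] [0]

/-! Write `n = j + 3k - 1`. Unfolding `φ^(j+2)(k-2) = W (j+1) · φ^(j+1)(k-1)` gives
`W (j+k) = V · W (j+1) · (W j shifted by k)`, so `V` is a prefix of `W (j+k)`. Now `V` begins
with `W (j+k-1)`, whose last letter `j+k-1` occurs in it only once; so two occurrences of
`W (j+k-1)` cannot overlap, and any other occurrence of `V` starts at `t ≥ |W (j+k-1)|`. But only
`|W (j+1)| + |W j|` letters follow the prefix `V`, and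
`W (j+k-1) = W (j+k-2) ⋯ W (j+1) W j · φ^j(k-1)` is strictly longer than that. -/

theorem List.eq_zero_of_isPrefix_drop_of_notMem {α : Type*} {a : α} {u l : List α} {t : ℕ}
    (ha : a ∉ u) (h₀ : u ++ [a] <+: l) (ht : u ++ [a] <+: l.drop t) (htu : t ≤ u.length) :
    t = 0 := by
  obtain ⟨r, rfl⟩ := h₀
  obtain ⟨s, hs⟩ := ht
  by_contra ht0
  have hau : (u ++ [a] ++ r)[u.length]? = u[u.length - t]? := by
    rw [← Nat.add_sub_cancel' htu, ← getElem?_drop, ← hs, Nat.add_sub_cancel_left,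
      List.append_assoc, getElem?_append_left (by omega)]
  simp only [List.append_assoc, getElem?_append_right le_rfl, Nat.sub_self,
    List.singleton_append, getElem?_cons_zero] at hau
  exact ha (mem_of_getElem? hau.symm)

theorem phiW_append (k : ℕ) (u v : List ℕ) : phiW k (u ++ v) = phiW k u ++ phiW k v :=
  List.flatMap_append ..

theorem phiW_iterate_append (k j : ℕ) (u v : List ℕ) :
    (phiW k)^[j] (u ++ v) = (phiW k)^[j] u ++ (phiW k)^[j] v := by
  induction j generalizing u v with
  | zero => rfl
  | succ j ih => simp only [Function.iterate_succ_apply, phiW_append, ih]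

theorem phiW_ne_nil (k : ℕ) {w : List ℕ} (hw : w ≠ []) : phiW k w ≠ [] := by
  obtain ⟨a, w, rfl⟩ := List.exists_cons_of_ne_nil hw
  simp only [phiW, List.flatMap_cons]
  split_ifs <;> simp

theorem phiW_iterate_ne_nil (k j : ℕ) {w : List ℕ} (hw : w ≠ []) : (phiW k)^[j] w ≠ [] := by
  induction j generalizing w with
  | zero => exact hw
  | succ j ih => exact ih (phiW_ne_nil k hw)

theorem phiW_singleton_of_lt {k c : ℕ} (hc : c + 1 < k) : phiW k [c] = [0, c + 1] := by
  simp [phiW, Nat.mod_eq_of_lt (show c < k by omega), Nat.div_eq_of_lt (show c < k by omega)]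
  omega

theorem phiW_singleton_pred {k : ℕ} (hk : 0 < k) : phiW k [k - 1] = [k] := by
  simp [phiW, Nat.mod_eq_of_lt (show k - 1 < k by omega)]
  omega

theorem phiW_map_add {k : ℕ} (hk : 0 < k) (w : List ℕ) :
    phiW k (w.map (· + k)) = (phiW k w).map (· + k) := by
  simp only [phiW, List.flatMap_map, List.map_flatMap]
  congr 1; funext a
  by_cases h : a % k = k - 1 <;> simp [h, Nat.add_div_right a hk, Nat.mul_add] <;> omega

theorem phiW_iterate_map_add {k : ℕ} (hk : 0 < k) (j : ℕ) (w : List ℕ) :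
    (phiW k)^[j] (w.map (· + k)) = ((phiW k)^[j] w).map (· + k) := by
  induction j generalizing w with
  | zero => rfl
  | succ j ih => simp only [Function.iterate_succ_apply, phiW_map_add hk, ih]

theorem W_succ (k n : ℕ) : W k (n + 1) = phiW k (W k n) := Function.iterate_succ_apply' ..

theorem phiW_iterate_succ_singleton_of_lt {k c : ℕ} (hc : c + 1 < k) (j : ℕ) :
    (phiW k)^[j + 1] [c] = W k j ++ (phiW k)^[j] [c + 1] := by
  rw [Function.iterate_succ_apply, phiW_singleton_of_lt hc,
    show [0, c + 1] = [0] ++ [c + 1] from rfl, phiW_iterate_append]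
  rfl

theorem phiW_iterate_succ_singleton_pred {k : ℕ} (hk : 0 < k) (j : ℕ) :
    (phiW k)^[j + 1] [k - 1] = (W k j).map (· + k) := by
  rw [Function.iterate_succ_apply, phiW_singleton_pred hk,
    show [k] = [0].map (· + k) by simp, phiW_iterate_map_add hk]
  rfl

theorem W_eq_append_singleton (k n : ℕ) : ∃ u, W k n = u ++ [n] ∧ ∀ a ∈ u, a < n := by
  induction n with
  | zero => exact ⟨[], rfl, by simp⟩
  | succ n ih =>
    obtain ⟨u, hu, hlt⟩ := ih
    have hφu : ∀ b ∈ phiW k u, b < n + 1 := by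
      intro b hb
      obtain ⟨a, ha, hb⟩ := List.mem_flatMap.1 hb
      have := hlt a ha
      have := Nat.mul_div_le a k
      split_ifs at hb <;> simp at hb <;> omega
    rw [W_succ, hu, phiW_append]
    by_cases h : n % k = k - 1
    · exact ⟨phiW k u, by simp [phiW, h], hφu⟩
    · refine ⟨phiW k u ++ [k * (n / k)], by simp [phiW, h], fun a ha => ?_⟩
      rcases List.mem_append.1 ha with ha | ha
      · exact hφu a ha
      · have := Nat.mul_div_le n k
        rw [List.mem_singleton.1 ha]
        omega

/-- `Wprod k s c = W (s + c - 1) ⋯ W (s + 1) W s`, so that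
`V_n = Wprod k (n + 3 - 3k) (k - 2)`. -/
def Wprod (k s c : ℕ) : List ℕ := ((List.range' s c).reverse.map (W k)).flatten

theorem Wprod_succ (k s c : ℕ) : Wprod k s (c + 1) = W k (s + c) ++ Wprod k s c := by
  simp [Wprod, List.range'_concat]

theorem Wprod_succ' (k s c : ℕ) : Wprod k s (c + 1) = Wprod k (s + 1) c ++ W k s := by
  simp [Wprod, List.range'_succ]

theorem W_add_of_lt {k c : ℕ} (hc : c < k) (j : ℕ) :
    W k (j + c) = Wprod k j c ++ (phiW k)^[j] [c] := by
  induction c generalizing j with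
  | zero => rfl
  | succ c ih =>
    rw [show j + (c + 1) = j + 1 + c by omega, ih (by omega), Wprod_succ',
      phiW_iterate_succ_singleton_of_lt hc, List.append_assoc]

theorem W_add_self {k : ℕ} (hk : 2 ≤ k) (j : ℕ) :
    W k (j + k) = Wprod k (j + 2) (k - 2) ++ W k (j + 1) ++ (W k j).map (· + k) := by
  have hc : k - 2 + 1 = k - 1 := by omega
  rw [show j + k = j + 2 + (k - 2) by omega, W_add_of_lt (by omega),
    phiW_iterate_succ_singleton_of_lt (by omega), hc, phiW_iterate_succ_singleton_pred (by omega),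
    List.append_assoc]

theorem Wprod_isPrefix_W_add_self {k : ℕ} (hk : 2 ≤ k) (j : ℕ) :
    Wprod k (j + 2) (k - 2) <+: W k (j + k) := by
  rw [W_add_self hk, List.append_assoc]
  exact List.prefix_append _ _

theorem length_W_succ_add_length_W_lt {k c : ℕ} (hc : 2 ≤ c) (hck : c < k) (j : ℕ) :
    (W k (j + 1)).length + (W k j).length < (W k (j + c)).length := by
  obtain ⟨c, rfl⟩ : ∃ c', c = c' + 2 := ⟨c - 2, by omega⟩
  have htail := List.length_pos_of_ne_nil (phiW_iterate_ne_nil k j (w := [c + 2]) (by simp))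
  rw [W_add_of_lt hck, Wprod_succ', Wprod_succ']
  simp only [List.length_append]
  omega

theorem eq_zero_of_Wprod_isPrefix_drop {k j t : ℕ} (hk : 3 ≤ k)
    (ht : Wprod k (j + 2) (k - 2) <+: (W k (j + k)).drop t) : t = 0 := by
  have hW := W_add_self (by omega : 2 ≤ k) j
  have hV : Wprod k (j + 2) (k - 2) = W k (j + (k - 1)) ++ Wprod k (j + 2) (k - 3) := by
    rw [show k - 2 = k - 3 + 1 by omega, Wprod_succ, show j + 2 + (k - 3) = j + (k - 1) by omega]
  obtain ⟨u, hu, hlt⟩ := W_eq_append_singleton k (j + (k - 1))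
  have hfirst : u ++ [j + (k - 1)] <+: Wprod k (j + 2) (k - 2) :=
    hu ▸ hV ▸ List.prefix_append _ _
  by_contra ht0
  have hut : u.length < t := by
    by_contra! htu
    exact ht0 (List.eq_zero_of_isPrefix_drop_of_notMem (fun h => (hlt _ h).false)
      (hfirst.trans (Wprod_isPrefix_W_add_self (by omega) j)) (hfirst.trans ht) htu)
  have hlen := ht.length_le
  have hVlen := congrArg List.length hV
  have hshort := length_W_succ_add_length_W_lt (k := k) (c := k - 1) (by omega) (by omega) j
  rw [List.length_drop, hW] at hlen
  simp only [hu, List.length_append, List.length_map, List.length_singleton] at hlen hVlen hshort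
  omega

theorem V_occurs_once (k n : ℕ) (hk : 3 ≤ k) (hn : 3 * k - 2 < n) :
    ∃! t : ℕ,
      (((List.range' (n + 3 - 3 * k) (k - 2)).reverse).map (W k)).flatten <+:
        (W k (n - 2 * k + 1)).drop t := by
  obtain ⟨j, rfl⟩ : ∃ j, n = j + (3 * k - 1) := ⟨n - (3 * k - 1), by omega⟩
  rw [show j + (3 * k - 1) + 3 - 3 * k = j + 2 by omega,
    show j + (3 * k - 1) - 2 * k + 1 = j + k by omega]
  exact ⟨0, Wprod_isPrefix_W_add_self (by omega) j,
    fun t ht => eq_zero_of_Wprod_isPrefix_drop hk ht⟩
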